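/- arXiv:2005.01359 — 4 statements merged into one kernel-verified Lean document; each statement's English description precedes it below -/
import Mathlib

section
/- Let D be a digraph and S, T disjoint vertex sets. If C₁ and C₂ are minimum S-T separators, and R₁, R₂ are the sets of vertices reachable from S after removing C₁, C₂ respectively, then the out-neighborhood of R₁ ∩ R₂ and the out-neighborhood of R₁ ∪ R₂ are also minimum S-T separators of D. -/
/-!
The vertices reachable from `S` after deleting a separator form a set `R` with `S ⊆ R` that avoids
`T` and whose out-neighbourhood `N⁺(R)` avoids `T`; for any such `R`, `N⁺(R)` is itself a separator
contained in the deleted one. This property is stable under `∩` and `∪`, and `R ↦ |N⁺(R)|` is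
submodular, because `N⁺(R₁ ∩ R₂) ∪ N⁺(R₁ ∪ R₂) ⊆ N⁺(R₁) ∪ N⁺(R₂)` and
`N⁺(R₁ ∩ R₂) ∩ N⁺(R₁ ∪ R₂) ⊆ N⁺(R₁) ∩ N⁺(R₂)`. Hence the two new separators have total size at
most `|C₁| + |C₂|`, while minimality makes them at least `|C₁|` and `|C₂|` respectively.
-/

variable {V : Type*}

/-- `u` reaches `v` in the digraph with arc relation `A` after deleting the vertex set `X`. -/
def Reaches (A : V → V → Prop) (X : Set V) (u v : V) : Prop :=
  u ∉ X ∧ Relation.ReflTransGen (fun a b => A a b ∧ b ∉ X) u v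

/-- The set of vertices reachable from `S` after deleting `X`. -/
def ReachSet (A : V → V → Prop) (S X : Set V) : Set V :=
  {v | ∃ s ∈ S, Reaches A X s v}

/-- The out-neighbourhood of `R`: vertices outside `R` with an in-neighbour in `R`. -/
def Nplus (A : V → V → Prop) (R : Set V) : Set V :=
  {v | v ∉ R ∧ ∃ u ∈ R, A u v}

/-- `C` is an `S`-`T` separator. -/
def IsSep (A : V → V → Prop) (S T C : Set V) : Prop :=
  C ∩ S = ∅ ∧ C ∩ T = ∅ ∧ ∀ s ∈ S, ∀ t ∈ T, ¬ Reaches A C s t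

/-- `C` is a minimum `S`-`T` separator. -/
def IsMinSep (A : V → V → Prop) (S T C : Set V) : Prop :=
  IsSep A S T C ∧ ∀ C', IsSep A S T C' → C.ncard ≤ C'.ncard

/-- `u` reaches `v` by a path all of whose vertices lie in `P`. -/
def ReachIn (A : V → V → Prop) (P : Set V) (u v : V) : Prop :=
  u ∈ P ∧ Relation.ReflTransGen (fun a b => A a b ∧ b ∈ P) u v

section

variable {A : V → V → Prop}

lemma mem_reachSet_of_adj {S C : Set V} {u v : V} (hu : u ∈ ReachSet A S C) (huv : A u v)
    (hv : v ∉ C) : v ∈ ReachSet A S C := by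
  obtain ⟨s, hs, hsC, hsu⟩ := hu
  exact ⟨s, hs, hsC, hsu.tail ⟨huv, hv⟩⟩

lemma subset_reachSet {S C : Set V} (hCS : C ∩ S = ∅) : S ⊆ ReachSet A S C := fun s hs =>
  ⟨s, hs, fun hsC => hCS.subset ⟨hsC, hs⟩, .refl⟩

lemma nplus_reachSet_subset {S C : Set V} : Nplus A (ReachSet A S C) ⊆ C := by
  rintro v ⟨hvR, u, huR, huv⟩
  by_contra hvC
  exact hvR (mem_reachSet_of_adj huR huv hvC)

lemma mem_of_reflTransGen_of_nplus_subset {R X : Set V} (hRX : Nplus A R ⊆ X) {u v : V}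
    (hu : u ∈ R) (huv : Relation.ReflTransGen (fun a b => A a b ∧ b ∉ X) u v) : v ∈ R := by
  induction huv with
  | refl => exact hu
  | tail _ hbc ih =>
    by_contra hc
    exact hbc.2 (hRX ⟨hc, _, ih, hbc.1⟩)

lemma nplus_inter_subset (R₁ R₂ : Set V) : Nplus A (R₁ ∩ R₂) ⊆ Nplus A R₁ ∪ Nplus A R₂ := by
  rintro v ⟨hv, u, ⟨hu₁, hu₂⟩, huv⟩
  by_cases hv₁ : v ∈ R₁
  · exact .inr ⟨fun hv₂ => hv ⟨hv₁, hv₂⟩, u, hu₂, huv⟩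
  · exact .inl ⟨hv₁, u, hu₁, huv⟩

lemma nplus_union_subset (R₁ R₂ : Set V) : Nplus A (R₁ ∪ R₂) ⊆ Nplus A R₁ ∪ Nplus A R₂ := by
  rintro v ⟨hv, u, hu₁ | hu₂, huv⟩
  · exact .inl ⟨fun h => hv (.inl h), u, hu₁, huv⟩
  · exact .inr ⟨fun h => hv (.inr h), u, hu₂, huv⟩

lemma nplus_inter_inter_nplus_union_subset (R₁ R₂ : Set V) :
    Nplus A (R₁ ∩ R₂) ∩ Nplus A (R₁ ∪ R₂) ⊆ Nplus A R₁ ∩ Nplus A R₂ := by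
  rintro v ⟨⟨-, u, ⟨hu₁, hu₂⟩, huv⟩, hv, -⟩
  exact ⟨⟨fun h => hv (.inl h), u, hu₁, huv⟩, ⟨fun h => hv (.inr h), u, hu₂, huv⟩⟩

lemma ncard_nplus_inter_add_ncard_nplus_union_le [Finite V] (R₁ R₂ : Set V) :
    (Nplus A (R₁ ∩ R₂)).ncard + (Nplus A (R₁ ∪ R₂)).ncard ≤
      (Nplus A R₁).ncard + (Nplus A R₂).ncard := by
  rw [← Set.ncard_union_add_ncard_inter (Nplus A (R₁ ∩ R₂)),
    ← Set.ncard_union_add_ncard_inter (Nplus A R₁)]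
  exact add_le_add
    (Set.ncard_le_ncard (Set.union_subset (nplus_inter_subset R₁ R₂) (nplus_union_subset R₁ R₂)))
    (Set.ncard_le_ncard (nplus_inter_inter_nplus_union_subset R₁ R₂))

def IsSourceSide (A : V → V → Prop) (S T R : Set V) : Prop :=
  S ⊆ R ∧ Disjoint R T ∧ Disjoint (Nplus A R) T

namespace IsSourceSide

variable {S T R₁ R₂ : Set V}

lemma inter (h₁ : IsSourceSide A S T R₁) (h₂ : IsSourceSide A S T R₂) :
    IsSourceSide A S T (R₁ ∩ R₂) :=
  ⟨Set.subset_inter h₁.1 h₂.1, h₁.2.1.mono_left Set.inter_subset_left,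
    (h₁.2.2.union_left h₂.2.2).mono_left (nplus_inter_subset R₁ R₂)⟩

lemma union (h₁ : IsSourceSide A S T R₁) (h₂ : IsSourceSide A S T R₂) :
    IsSourceSide A S T (R₁ ∪ R₂) :=
  ⟨h₁.1.trans Set.subset_union_left, h₁.2.1.union_left h₂.2.1,
    (h₁.2.2.union_left h₂.2.2).mono_left (nplus_union_subset R₁ R₂)⟩

lemma isSep_nplus (h : IsSourceSide A S T R₁) : IsSep A S T (Nplus A R₁) := by
  refine ⟨Set.eq_empty_of_forall_notMem fun v ⟨hvN, hvS⟩ => hvN.1 (h.1 hvS),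
    Set.disjoint_iff_inter_eq_empty.1 h.2.2, ?_⟩
  rintro s hs t ht ⟨-, hst⟩
  exact h.2.1.notMem_of_mem_right ht (mem_of_reflTransGen_of_nplus_subset subset_rfl (h.1 hs) hst)

end IsSourceSide

lemma IsSep.isSourceSide_reachSet {S T C : Set V} (h : IsSep A S T C) :
    IsSourceSide A S T (ReachSet A S C) := by
  refine ⟨subset_reachSet h.1, Set.disjoint_right.2 fun t ht ⟨s, hs, hst⟩ => h.2.2 s hs t ht hst,
    Set.disjoint_iff_inter_eq_empty.2 (Set.eq_empty_of_subset_empty ?_)⟩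
  exact h.2.1 ▸ Set.inter_subset_inter_left T nplus_reachSet_subset

lemma IsMinSep.of_ncard_le {S T C C' : Set V} (hC : IsMinSep A S T C) (hC' : IsSep A S T C')
    (hle : C'.ncard ≤ C.ncard) : IsMinSep A S T C' :=
  ⟨hC', fun C'' hC'' => hle.trans (hC.2 C'' hC'')⟩

end

theorem submodularity_of_separators_general [Fintype V] (A : V → V → Prop) (S T C₁ C₂ : Set V)
    (h1 : IsMinSep A S T C₁) (h2 : IsMinSep A S T C₂) :
    IsMinSep A S T (Nplus A (ReachSet A S C₁ ∩ ReachSet A S C₂)) ∧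
      IsMinSep A S T (Nplus A (ReachSet A S C₁ ∪ ReachSet A S C₂)) := by
  set R₁ := ReachSet A S C₁
  set R₂ := ReachSet A S C₂
  have hR₁ : IsSourceSide A S T R₁ := h1.1.isSourceSide_reachSet
  have hR₂ : IsSourceSide A S T R₂ := h2.1.isSourceSide_reachSet
  have hP := (hR₁.inter hR₂).isSep_nplus
  have hQ := (hR₁.union hR₂).isSep_nplus
  have hsum : (Nplus A (R₁ ∩ R₂)).ncard + (Nplus A (R₁ ∪ R₂)).ncard ≤ C₁.ncard + C₂.ncard :=
    (ncard_nplus_inter_add_ncard_nplus_union_le R₁ R₂).trans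
      (add_le_add (Set.ncard_le_ncard nplus_reachSet_subset)
        (Set.ncard_le_ncard nplus_reachSet_subset))
  have hP_ge := h1.2 _ hP
  have hQ_ge := h2.2 _ hQ
  exact ⟨h1.of_ncard_le hP (by omega), h2.of_ncard_le hQ (by omega)⟩

/-- Submodularity of separators. -/
theorem submodularity_of_separators [Fintype V] (A : V → V → Prop) (S T C₁ C₂ : Set V)
    (hST : Disjoint S T)
    (h1 : IsMinSep A S T C₁) (h2 : IsMinSep A S T C₂) :
    IsMinSep A S T (Nplus A (ReachSet A S C₁ ∩ ReachSet A S C₂)) ∧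
      IsMinSep A S T (Nplus A (ReachSet A S C₁ ∪ ReachSet A S C₂)) :=
  submodularity_of_separators_general A S T C₁ C₂ h1 h2
end

section
/- Let D be a digraph, X ⊆ V(D) an H-deletion set (no strong component of D − X contains a subgraph isomorphic to a member of the family H), and F ⊆ D a subgraph isomorphic to some graph in H. Suppose there is a collection of paths P containing, for each ordered pair (x,y) ∈ V(F) × V(F), a directed path P_{xy} from x to y in D. Then there exists a vertex a ∈ X such that for every v ∈ V(F) there is a directed path from v to a and a directed path from a to v, both contained in the union of the paths in P. -/
variable {V : Type*}

/-! Since `F − X` cannot be strongly connected in `D − X`, either `F` already meets `X`, or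
some path `P_{xy}` must leave `D − X`, i.e. pass through a vertex `a ∈ X`. Then
`v → x → a → y → v` inside `⋃ P` connects every `v ∈ V(F)` to `a` and back. -/

theorem Relation.ReflTransGen.avoids_or_exists_mem {α : Type*} {r : α → α → Prop} {X : Set α}
    {u v : α} (h : Relation.ReflTransGen r u v) :
    Relation.ReflTransGen (fun a b => r a b ∧ b ∉ X) u v ∨
      ∃ a ∈ X, Relation.ReflTransGen r u a ∧ Relation.ReflTransGen r a v := by
  induction h with
  | refl => exact .inl .refl
  | @tail b c hub hbc ih =>
    rcases ih with hout | ⟨a, haX, hua, hab⟩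
    · by_cases hc : c ∈ X
      · exact .inr ⟨c, hc, hub.tail hbc, .refl⟩
      · exact .inl (hout.tail ⟨hbc, hc⟩)
    · exact .inr ⟨a, haX, hua, hab.tail hbc⟩

namespace ReachIn

variable {A : V → V → Prop} {P : Set V} {u v w : V}

theorem mem_right (h : ReachIn A P u v) : v ∈ P :=
  h.2.cases_tail.elim (· ▸ h.1) fun ⟨_, _, hcv⟩ => hcv.2

theorem trans (huv : ReachIn A P u v) (hvw : ReachIn A P v w) : ReachIn A P u w :=
  ⟨huv.1, huv.2.trans hvw.2⟩

theorem reaches_or_exists_mem {X : Set V} (h : ReachIn A P u v) (hu : u ∉ X) :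
    Reaches A X u v ∨ ∃ a ∈ X, ReachIn A P u a ∧ ReachIn A P a v := by
  rcases h.2.avoids_or_exists_mem (X := X) with hout | ⟨a, haX, hua, hav⟩
  · exact .inl ⟨hu, Relation.ReflTransGen.mono (fun _ _ hab => ⟨hab.1.1, hab.2⟩) _ _ hout⟩
  · have hua : ReachIn A P u a := ⟨h.1, hua⟩
    exact .inr ⟨a, haX, hua, hua.mem_right, hav⟩

end ReachIn

/-- Let `X` be an `H`-deletion set of the digraph `A` (no strong component of `D − X`
contains a subgraph isomorphic to a member of the family `H`), let `F` be a subgraph of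
`D` isomorphic to a member `p` of `H` (via the injective arc-preserving map `f`), and
suppose `P` is the vertex set of a collection of paths containing, for each ordered pair
of vertices of `F`, a directed path between them in `D`. Then some vertex `a ∈ X` is
connected to and from every vertex of `F` by paths contained in the union `P`. -/
theorem solution_hits_paths (A : V → V → Prop) (X : Set V)
    (H : Set (Σ W : Type, W → W → Prop))
    (hX : ¬ ∃ p ∈ H, ∃ f : p.1 → V, Function.Injective f ∧
      (∀ a b, p.2 a b → A (f a) (f b)) ∧ (∀ a, f a ∉ X) ∧
      ∀ a b : p.1, Reaches A X (f a) (f b))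
    (p : Σ W : Type, W → W → Prop) (hp : p ∈ H)
    (f : p.1 → V) (hinj : Function.Injective f)
    (hhom : ∀ a b, p.2 a b → A (f a) (f b))
    (P : Set V)
    (hP : ∀ x y : p.1, ReachIn A P (f x) (f y)) :
    ∃ a ∈ X, ∀ w : p.1, ReachIn A P (f w) a ∧ ReachIn A P a (f w) := by
  by_cases hFX : ∃ w, f w ∈ X
  · obtain ⟨w₀, hw₀⟩ := hFX
    exact ⟨f w₀, hw₀, fun w => ⟨hP w w₀, hP w₀ w⟩⟩
  push Not at hFX
  obtain ⟨a₀, b₀, hsep⟩ : ∃ a₀ b₀, ¬ Reaches A X (f a₀) (f b₀) := by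
    by_contra! hstrong
    exact hX ⟨p, hp, f, hinj, hhom, hFX, hstrong⟩
  obtain hreach | ⟨a, haX, ha₀a, hab₀⟩ := (hP a₀ b₀).reaches_or_exists_mem (hFX a₀)
  · exact absurd hreach hsep
  exact ⟨a, haX, fun w => ⟨(hP w a₀).trans ha₀a, hab₀.trans (hP b₀ w)⟩⟩
end

section
/- Let D be a digraph, S, T disjoint subsets of V(D) with λ_D(S,T) ≥ 1, and let C be a minimum S-T separator such that no vertex of R(S,C) (the set reachable from S in D − C) has out-degree ≥ 2 in D and R(S,C) is maximal with this property among minimum separators. If C is not the furthest minimum S-T separator, then there exists a vertex u₁ ∈ C with at least two out-neighbors in D, neither of which lies in T. -/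
variable {V : Type*}

/-!
Suppose no vertex of `C` has two out-neighbours outside `T`, and let `R` be the set reachable
from `S` in `D − C`. A minimum separator reaching beyond `R` lets us reach some `c ∈ C` entered
by an arc from `R`; every out-neighbour of `c` then avoids `T`, so `c` has a single
out-neighbour `y`, and minimality of `C` puts `y` outside `R ∪ C`. Pushing `c` forward to `y`
gives a minimum separator whose reachable set is `R ∪ {c}`, still of out-degree at most one,
which contradicts the maximality of `R`.
-/

section Separators

variable {A : V → V → Prop} {S T X Y : Set V} {c r v w y : V}

lemma mem_reachSet_of_mem (hv : v ∈ S) (hvX : v ∉ X) : v ∈ ReachSet A S X :=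
  ⟨v, hv, hvX, .refl⟩

lemma notMem_of_mem_reachSet (hv : v ∈ ReachSet A S X) : v ∉ X := by
  obtain ⟨s, -, hsX, hw⟩ := hv
  induction hw with
  | refl => exact hsX
  | tail _ hab => exact hab.2

lemma mem_reachSet_of_arc (hv : v ∈ ReachSet A S X) (hvw : A v w) (hwX : w ∉ X) :
    w ∈ ReachSet A S X := by
  obtain ⟨s, hs, hsX, hw⟩ := hv
  exact ⟨s, hs, hsX, hw.tail ⟨hvw, hwX⟩⟩

lemma reachSet_subset_of_closed {P : Set V} (hS : ∀ s ∈ S, s ∉ X → s ∈ P)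
    (hstep : ∀ a ∈ P, a ∈ ReachSet A S X → ∀ b, A a b → b ∉ X → b ∈ P) :
    ReachSet A S X ⊆ P := by
  rintro v ⟨s, hs, hsX, hw⟩
  induction hw with
  | refl => exact hS s hs hsX
  | tail hw hab ih => exact hstep _ ih ⟨s, hs, hsX, hw⟩ _ hab.1 hab.2

lemma reachSet_subset_reachSet (h : Disjoint (ReachSet A S X) Y) :
    ReachSet A S X ⊆ ReachSet A S Y :=
  reachSet_subset_of_closed
    (fun _ hs hsX => mem_reachSet_of_mem hs (Set.disjoint_left.mp h (mem_reachSet_of_mem hs hsX)))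
    (fun _ haY haX _ hab hbX =>
      mem_reachSet_of_arc haY hab (Set.disjoint_left.mp h (mem_reachSet_of_arc haX hab hbX)))

lemma reachSet_subset_insert (hXY : X \ {c} ⊆ Y)
    (hc : ∀ w, A c w → w ∈ ReachSet A S X ∪ X ∪ Y) :
    ReachSet A S Y ⊆ insert c (ReachSet A S X) := by
  have hX : ∀ w, w ∉ Y → w ∈ X → w = c := fun w hwY hwX => by
    by_contra hwc
    exact hwY (hXY ⟨hwX, hwc⟩)
  refine reachSet_subset_of_closed (fun s hs hsY => ?_) (fun a ha _ b hab hbY => ?_)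
  · by_cases hsX : s ∈ X
    · exact .inl (hX s hsY hsX)
    · exact .inr (mem_reachSet_of_mem hs hsX)
  · by_cases hbX : b ∈ X
    · exact .inl (hX b hbY hbX)
    rcases ha with rfl | haR
    · rcases hc b hab with (hbR | hbX') | hbY'
      exacts [.inr hbR, absurd hbX' hbX, absurd hbY' hbY]
    · exact .inr (mem_reachSet_of_arc haR hab hbX)

lemma exists_arc_into_of_notMem_reachSet (hXS : X ∩ S = ∅) (hv : v ∈ ReachSet A S Y)
    (hvX : v ∉ ReachSet A S X) :
    ∃ r ∈ ReachSet A S X, ∃ c ∈ X, A r c ∧ c ∈ ReachSet A S Y := by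
  by_contra! hno
  refine hvX (reachSet_subset_of_closed (fun s hs _ => ?_) (fun a haX haY b hab hbY => ?_) hv)
  · exact mem_reachSet_of_mem hs fun hsX => hXS.subset ⟨hsX, hs⟩
  · have hbY' := mem_reachSet_of_arc haY hab hbY
    exact mem_reachSet_of_arc haX hab fun hbX => hno a haX b hbX hab hbY'

lemma IsSep.notMem_of_mem_reachSet (h : IsSep A S T X) (hv : v ∈ ReachSet A S X) : v ∉ T := by
  obtain ⟨s, hs, hsv⟩ := hv
  exact fun hvT => h.2.2 s hs v hvT hsv

lemma IsSep.notMem_of_arc (h : IsSep A S T X) (hv : v ∈ ReachSet A S X) (hvw : A v w) :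
    w ∉ T := by
  by_cases hwX : w ∈ X
  · exact fun hwT => h.2.1.subset ⟨hwX, hwT⟩
  · exact h.notMem_of_mem_reachSet (mem_reachSet_of_arc hv hvw hwX)

lemma IsSep.of_reachSet_subset (h : IsSep A S T X) (hYS : Y ∩ S = ∅) (hYT : Y ∩ T = ∅)
    (hR : ReachSet A S Y ⊆ ReachSet A S X ∪ X) : IsSep A S T Y := by
  refine ⟨hYS, hYT, fun s hs t ht hst => ?_⟩
  rcases hR ⟨s, hs, hst⟩ with htR | htX
  · exact h.notMem_of_mem_reachSet htR ht
  · exact h.2.1.subset ⟨htX, ht⟩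

lemma IsMinSep.of_ncard_le_s12 (hX : IsMinSep A S T X) (hY : IsSep A S T Y)
    (hcard : Y.ncard ≤ X.ncard) : IsMinSep A S T Y :=
  ⟨hY, fun Z hZ => hcard.trans (hX.2 Z hZ)⟩

/-- Otherwise `X \ {c}` would be a smaller separator. -/
lemma IsMinSep.exists_arc_notMem_reachSet [Finite V] (hX : IsMinSep A S T X) (hc : c ∈ X) :
    ∃ y, A c y ∧ y ∉ ReachSet A S X ∧ y ∉ X := by
  by_contra! hno
  have hsep : IsSep A S T (X \ {c}) := by
    refine hX.1.of_reachSet_subset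
      (Set.subset_eq_empty (Set.inter_subset_inter_left S Set.sdiff_subset) hX.1.1)
      (Set.subset_eq_empty (Set.inter_subset_inter_left T Set.sdiff_subset) hX.1.2.1) ?_
    refine (reachSet_subset_insert subset_rfl fun w hcw => ?_).trans
      (Set.insert_subset (.inr hc) Set.subset_union_left)
    by_cases hwR : w ∈ ReachSet A S X
    · exact .inl (.inl hwR)
    · exact .inl (.inr (hno w hcw hwR))
  have := hX.2 _ hsep
  have := Set.ncard_sdiff_singleton_lt_of_mem hc (Set.toFinite X)
  omega

lemma IsMinSep.push_along_unique_arc [Finite V] (hX : IsMinSep A S T X) (hc : c ∈ X)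
    (hr : r ∈ ReachSet A S X) (hrc : A r c)
    (hyR : y ∉ ReachSet A S X) (hyX : y ∉ X) (hyT : y ∉ T)
    (huniq : ∀ w, A c w → w = y) :
    IsMinSep A S T (insert y (X \ {c})) ∧
      ReachSet A S (insert y (X \ {c})) = insert c (ReachSet A S X) := by
  have hyS : y ∉ S := fun hyS => hyR (mem_reachSet_of_mem hyS hyX)
  have hsub : ReachSet A S (insert y (X \ {c})) ⊆ insert c (ReachSet A S X) :=
    reachSet_subset_insert (Set.subset_insert _ _) fun w hcw => .inr (huniq w hcw ▸ .inl rfl)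
  have hdisj : Disjoint (ReachSet A S X) (insert y (X \ {c})) := by
    refine Set.disjoint_left.mpr fun v hv hvY => ?_
    rcases hvY with rfl | hvX
    exacts [hyR hv, notMem_of_mem_reachSet hv hvX.1]
  have hcY : c ∉ insert y (X \ {c}) := by
    rintro (rfl | hcX)
    exacts [hyX hc, hcX.2 rfl]
  have hsep : IsSep A S T (insert y (X \ {c})) := by
    refine hX.1.of_reachSet_subset ?_ ?_
      (hsub.trans (Set.insert_subset (.inr hc) Set.subset_union_left))
    · rw [Set.insert_inter_of_notMem hyS]
      exact Set.subset_eq_empty (Set.inter_subset_inter_left S Set.sdiff_subset) hX.1.1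
    · rw [Set.insert_inter_of_notMem hyT]
      exact Set.subset_eq_empty (Set.inter_subset_inter_left T Set.sdiff_subset) hX.1.2.1
  have hcard : (insert y (X \ {c})).ncard ≤ X.ncard :=
    (Set.ncard_insert_le _ _).trans (Set.ncard_sdiff_singleton_add_one hc (Set.toFinite X)).le
  refine ⟨hX.of_ncard_le_s12 hsep hcard,
    hsub.antisymm (Set.insert_subset ?_ (reachSet_subset_reachSet hdisj))⟩
  exact mem_reachSet_of_arc (reachSet_subset_reachSet hdisj hr) hrc hcY

end Separators

theorem branchable_vertex_on_separator_general [Fintype V] (A : V → V → Prop) (S T : Set V)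
    (C : Set V) (hC : IsMinSep A S T C)
    (hdeg1 : ∀ v ∈ ReachSet A S C, ∀ a b, A v a → A v b → a = b)
    (hmax : ∀ C', IsMinSep A S T C' →
      (∀ v ∈ ReachSet A S C', ∀ a b, A v a → A v b → a = b) →
      ReachSet A S C' ⊆ ReachSet A S C)
    (hnotfar : ∃ C', IsMinSep A S T C' ∧ ¬ ReachSet A S C' ⊆ ReachSet A S C) :
    ∃ u₁ ∈ C, ∃ u₂ u₃ : V, u₂ ≠ u₃ ∧ A u₁ u₂ ∧ A u₁ u₃ ∧ u₂ ∉ T ∧ u₃ ∉ T := by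
  by_contra! hgoal
  obtain ⟨C', hC', hnot⟩ := hnotfar
  obtain ⟨x, hxC', hxC⟩ := Set.not_subset.mp hnot
  obtain ⟨r, hr, c, hc, hrc, hcC'⟩ :=
    exists_arc_into_of_notMem_reachSet hC.1.1 hxC' hxC
  have hcT : ∀ w, A c w → w ∉ T := fun w => hC'.1.notMem_of_arc hcC'
  obtain ⟨y, hcy, hyR, hyC⟩ := hC.exists_arc_notMem_reachSet hc
  have huniq : ∀ w, A c w → w = y := fun w hcw => by
    by_contra hwy
    exact hcT y hcy (hgoal c hc w y hwy hcw hcy (hcT w hcw))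
  obtain ⟨hpush, hreach⟩ := hC.push_along_unique_arc hc hr hrc hyR hyC (hcT y hcy) huniq
  have hdeg : ∀ v ∈ ReachSet A S (insert y (C \ {c})), ∀ a b, A v a → A v b → a = b := by
    rw [hreach]
    rintro v (rfl | hv) a b ha hb
    · rw [huniq a ha, huniq b hb]
    · exact hdeg1 v hv a b ha hb
  have hcR : c ∈ ReachSet A S C := hmax _ hpush hdeg (hreach ▸ Set.mem_insert c _)
  exact notMem_of_mem_reachSet hcR hc

/-- Let `C` be a minimum `S`-`T` separator (with `λ_D(S,T) ≥ 1`) such that every vertex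
reachable from `S` in `D − C` has out-degree at most 1, and such that the reachable set
is maximal with this property among minimum separators. If `C` is not the furthest
minimum `S`-`T` separator, then some vertex `u₁ ∈ C` has two distinct out-neighbours in
`D`, neither of which lies in `T`. -/
theorem branchable_vertex_on_separator [Fintype V] (A : V → V → Prop) (S T : Set V)
    (hST : Disjoint S T)
    (hpos : ¬ IsSep A S T ∅)
    (C : Set V) (hC : IsMinSep A S T C)
    (hdeg1 : ∀ v ∈ ReachSet A S C, ∀ a b, A v a → A v b → a = b)
    (hmax : ∀ C', IsMinSep A S T C' →
      (∀ v ∈ ReachSet A S C', ∀ a b, A v a → A v b → a = b) →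
      ReachSet A S C' ⊆ ReachSet A S C)
    (hnotfar : ∃ C', IsMinSep A S T C' ∧ ¬ ReachSet A S C' ⊆ ReachSet A S C) :
    ∃ u₁ ∈ C, ∃ u₂ u₃ : V, u₂ ≠ u₃ ∧ A u₁ u₂ ∧ A u₁ u₃ ∧ u₂ ∉ T ∧ u₃ ∉ T :=
  branchable_vertex_on_separator_general A S T C hC hdeg1 hmax hnotfar
end

section
/- Let D be a digraph, S₁ ⊆ R ⊆ V(D) such that every vertex of R is reachable from S₁ within D[R] and has out-degree at most 1 in D. Define close(S₁,R) = (R \ S₁) ∩ N⁻(S₁), the in-neighbors of S₁ in R \ S₁. Then |close(S₁,R)| ≤ |S₁|. -/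
variable {V : Type*}

/-! Each vertex `v` of `close(S₁,R)` is reached from some `s ∈ S₁` by a path of `D[R]` whose
later vertices avoid `S₁` (cut any path at its last vertex in `S₁`). Out-degree at most one makes
such paths from `s` a single chain, and `v` ends it, since its only out-neighbour lies in `S₁`.
Hence `v ↦ s` is injective. -/

def ArcAvoiding (A : V → V → Prop) (R S : Set V) (a b : V) : Prop :=
  a ∈ R ∧ A a b ∧ b ∈ R ∧ b ∉ S

theorem Relation.ReflTransGen.eq_of_rightUnique_of_terminal {α : Type*} {r : α → α → Prop}
    {a u w : α} (hr : Relator.RightUnique r) (hu : Relation.ReflTransGen r a u)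
    (hw : Relation.ReflTransGen r a w) (hu_term : ∀ x, ¬ r u x) (hw_term : ∀ x, ¬ r w x) :
    u = w := by
  rcases hu.total_of_right_unique hr hw with huw | hwu
  · rcases huw.cases_head with rfl | ⟨x, hux, -⟩
    · rfl
    · exact absurd hux (hu_term x)
  · rcases hwu.cases_head with rfl | ⟨x, hwx, -⟩
    · rfl
    · exact absurd hwx (hw_term x)

section

variable {A : V → V → Prop} {R S : Set V}

theorem ReachIn.mem_right_s13 {u v : V} (h : ReachIn A R u v) : v ∈ R := by
  rcases h.2.cases_tail with rfl | ⟨x, -, -, hv⟩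
  exacts [h.1, hv]

theorem rightUnique_arcAvoiding (hdeg : ∀ v ∈ R, ∀ a b, A v a → A v b → a = b) :
    Relator.RightUnique (ArcAvoiding A R S) :=
  fun a _ _ hab hac => hdeg a hab.1 _ _ hab.2.1 hac.2.1

theorem not_arcAvoiding_of_arc_mem (hdeg : ∀ v ∈ R, ∀ a b, A v a → A v b → a = b)
    {v t : V} (hv : v ∈ R) (hvt : A v t) (ht : t ∈ S) (w : V) : ¬ ArcAvoiding A R S v w :=
  fun hvw => hvw.2.2.2 (hdeg v hv _ _ hvt hvw.2.1 ▸ ht)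

theorem ReachIn.exists_reflTransGen_arcAvoiding {s v : V} (h : ReachIn A R s v) (hs : s ∈ S) :
    ∃ s' ∈ S, Relation.ReflTransGen (ArcAvoiding A R S) s' v := by
  obtain ⟨hsR, hsv⟩ := h
  induction hsv with
  | refl => exact ⟨s, hs, .refl⟩
  | @tail a b hsa hab ih =>
    by_cases hb : b ∈ S
    · exact ⟨b, hb, .refl⟩
    · obtain ⟨s', hs', hs'a⟩ := ih
      exact ⟨s', hs', hs'a.tail ⟨ReachIn.mem_right_s13 ⟨hsR, hsa⟩, hab.1, hab.2, hb⟩⟩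

end

theorem close_card_le_general [Fintype V] (A : V → V → Prop) (S₁ R : Set V)
    (hreach : ∀ v ∈ R, ∃ s ∈ S₁, ReachIn A R s v)
    (hdeg : ∀ v ∈ R, ∀ a b, A v a → A v b → a = b) :
    ((R \ S₁) ∩ {v | ∃ s ∈ S₁, A v s}).ncard ≤ S₁.ncard := by
  set C := (R \ S₁) ∩ {v | ∃ s ∈ S₁, A v s}
  have hsource : ∀ v ∈ C, ∃ s ∈ S₁, Relation.ReflTransGen (ArcAvoiding A R S₁) s v :=
    fun v hv => by
      obtain ⟨s, hs, hsv⟩ := hreach v hv.1.1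
      exact hsv.exists_reflTransGen_arcAvoiding hs
  choose! source hsource_mem hsource_path using hsource
  have hterminal : ∀ v ∈ C, ∀ w, ¬ ArcAvoiding A R S₁ v w := fun v hv => by
    obtain ⟨t, ht, hvt⟩ := hv.2
    exact not_arcAvoiding_of_arc_mem hdeg hv.1.1 hvt ht
  refine Set.ncard_le_ncard_of_injOn source hsource_mem ?_ S₁.toFinite
  intro v hv w hw hvw
  exact (hsource_path v hv).eq_of_rightUnique_of_terminal (rightUnique_arcAvoiding hdeg)
    (hvw ▸ hsource_path w hw) (hterminal v hv) (hterminal w hw)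

/-- If every vertex of `R ⊇ S₁` is reachable from `S₁` inside `D[R]` and has out-degree
at most 1 in `D`, then `close(S₁,R) = (R \ S₁) ∩ N⁻(S₁)` has at most `|S₁|` elements. -/
theorem close_card_le [Fintype V] (A : V → V → Prop) (S₁ R : Set V)
    (hSR : S₁ ⊆ R)
    (hreach : ∀ v ∈ R, ∃ s ∈ S₁, ReachIn A R s v)
    (hdeg : ∀ v ∈ R, ∀ a b, A v a → A v b → a = b) :
    ((R \ S₁) ∩ {v | ∃ s ∈ S₁, A v s}).ncard ≤ S₁.ncard :=
  close_card_le_general A S₁ R hreach hdeg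
end
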